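/- (Theorem 1, part 1: the optimal acceptance threshold.) Fix n ≥ 1, σ > 0, μ ∈ ℝ, ρ = μ/σ, p = Φ(ρ), q = Φ(−ρ), f = φ(ρ), ν = σ·f/√(q·p·n). Define g : ℝ → ℝ by g(α) = μ·Φ(τ(α)) + ν·φ(τ(α)), where τ(α) = (p − α)·√(n/(q·p)). Then α̂₀ := p·(1 − q·ρ/f) is the strict global maximizer of g: for every α ∈ ℝ with α ≠ α̂₀ one has g(α) < g(α̂₀). -/

import Mathlib

/-! With `h(s) = μ Φ(s) + ν φ(s)` we have `g = h ∘ τ`. Since `φ' = -s φ`, the derivative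
`h'(s) = φ(s) (μ - ν s)` changes sign only at `μ / ν`, the strict global maximizer of `h`.
The map `τ` is affine and injective, and `τ(α̂₀) = μ / ν` because `q p √(n / (q p)) = √(q p n)`. -/

open MeasureTheory ProbabilityTheory

/-- The standard normal density φ(t) = (2π)^{-1/2} e^{-t²/2}. -/
noncomputable def stdNormalPDF (t : ℝ) : ℝ :=
  (Real.sqrt (2 * Real.pi))⁻¹ * Real.exp (-t ^ 2 / 2)

/-- The standard normal distribution function Φ(x) = ∫_{-∞}^x φ(t) dt. -/
noncomputable def stdNormalCDF (x : ℝ) : ℝ :=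
  ∫ t in Set.Iic x, stdNormalPDF t

theorem hasDerivAt_setIntegral_Iic {E : Type*} [NormedAddCommGroup E] [NormedSpace ℝ E]
    [CompleteSpace E] {f : ℝ → E} (hf : Integrable f) (hc : Continuous f) (x : ℝ) :
    HasDerivAt (fun y => ∫ t in Set.Iic y, f t) (f x) x := by
  have hsplit : ∀ y, ∫ t in Set.Iic y, f t = (∫ t in Set.Iic 0, f t) + ∫ t in (0 : ℝ)..y, f t :=
    fun y => eq_add_of_sub_eq' (intervalIntegral.integral_Iic_sub_Iic hf.integrableOn
      hf.integrableOn)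
  exact ((intervalIntegral.integral_hasDerivAt_right hf.intervalIntegrable
    (hc.stronglyMeasurableAtFilter _ _) hc.continuousAt).const_add _).congr_of_eventuallyEq
    (Filter.Eventually.of_forall hsplit)

theorem stdNormalPDF_pos (t : ℝ) : 0 < stdNormalPDF t := by
  unfold stdNormalPDF
  have := Real.pi_pos
  positivity

theorem continuous_stdNormalPDF : Continuous stdNormalPDF := by
  unfold stdNormalPDF
  fun_prop

theorem integrable_stdNormalPDF : Integrable stdNormalPDF := by
  convert (integrable_exp_neg_mul_sq (b := 1 / 2) (by norm_num)).const_mul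
    (Real.sqrt (2 * Real.pi))⁻¹ using 1
  funext t
  rw [stdNormalPDF]
  ring_nf

theorem hasDerivAt_stdNormalPDF (t : ℝ) :
    HasDerivAt stdNormalPDF (-t * stdNormalPDF t) t := by
  have hexp : HasDerivAt (fun s : ℝ => -s ^ 2 / 2) (-t) t := by
    simpa using ((hasDerivAt_pow 2 t).neg.div_const 2).congr_deriv (by ring)
  have h : HasDerivAt stdNormalPDF
      ((Real.sqrt (2 * Real.pi))⁻¹ * (Real.exp (-t ^ 2 / 2) * -t)) t :=
    hexp.exp.const_mul _
  exact h.congr_deriv (by rw [stdNormalPDF]; ring)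

theorem hasDerivAt_stdNormalCDF (x : ℝ) : HasDerivAt stdNormalCDF (stdNormalPDF x) x :=
  hasDerivAt_setIntegral_Iic integrable_stdNormalPDF continuous_stdNormalPDF x

theorem stdNormalCDF_pos (x : ℝ) : 0 < stdNormalCDF x := by
  have hsupp : Function.support stdNormalPDF = Set.univ :=
    Set.eq_univ_of_forall fun t => (stdNormalPDF_pos t).ne'
  rw [stdNormalCDF, setIntegral_pos_iff_support_of_nonneg_ae
    (Filter.Eventually.of_forall fun t => (stdNormalPDF_pos t).le)
    integrable_stdNormalPDF.integrableOn, hsupp, Set.univ_inter]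
  simp [Real.volume_Iic]

theorem mul_stdNormalCDF_add_mul_stdNormalPDF_lt {m v : ℝ} (hv : 0 < v) {s : ℝ}
    (hs : s ≠ m / v) :
    m * stdNormalCDF s + v * stdNormalPDF s
      < m * stdNormalCDF (m / v) + v * stdNormalPDF (m / v) := by
  set h : ℝ → ℝ := fun s => m * stdNormalCDF s + v * stdNormalPDF s
  have hderiv : ∀ s, HasDerivAt h (stdNormalPDF s * (m - v * s)) s := fun s =>
    (((hasDerivAt_stdNormalCDF s).const_mul m).add
      ((hasDerivAt_stdNormalPDF s).const_mul v)).congr_deriv (by ring)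
  have hcont : Continuous h := continuous_iff_continuousAt.2 fun s => (hderiv s).continuousAt
  rcases hs.lt_or_gt with hlt | hgt
  · have hmono : StrictMonoOn h (Set.Iic (m / v)) := by
      refine strictMonoOn_of_deriv_pos (convex_Iic _) hcont.continuousOn fun x hx => ?_
      rw [interior_Iic, Set.mem_Iio, lt_div_iff₀' hv] at hx
      rw [(hderiv x).deriv]
      exact mul_pos (stdNormalPDF_pos x) (by linarith)
    exact hmono hlt.le Set.self_mem_Iic hlt
  · have hanti : StrictAntiOn h (Set.Ici (m / v)) := by
      refine strictAntiOn_of_deriv_neg (convex_Ici _) hcont.continuousOn fun x hx => ?_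
      rw [interior_Ici, Set.mem_Ioi, div_lt_iff₀' hv] at hx
      rw [(hderiv x).deriv]
      exact mul_neg_of_pos_of_neg (stdNormalPDF_pos x) (by linarith)
    exact hanti Set.self_mem_Ici hgt.le hgt

theorem mul_sqrt_div_self {a : ℝ} (ha : 0 < a) (b : ℝ) :
    a * Real.sqrt (b / a) = Real.sqrt (a * b) := by
  have : Real.sqrt a ≠ 0 := (Real.sqrt_pos.2 ha).ne'
  rw [Real.sqrt_div' _ ha.le, Real.sqrt_mul ha.le]
  field_simp
  rw [Real.sq_sqrt ha.le, mul_comm]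

/-- Theorem 1, part 1: α̂₀ = p(1 − qρ/f) is the strict global maximizer of the
smoothed expected one-step capital increment. -/
theorem optimal_threshold_strict_global_max
    (n : ℕ) (hn : 1 ≤ n) (μ σ : ℝ) (hσ : 0 < σ)
    (ρ p q f ν α₀ : ℝ) (hρ : ρ = μ / σ) (hp : p = stdNormalCDF ρ) (hq : q = stdNormalCDF (-ρ))
    (hf : f = stdNormalPDF ρ) (hν : ν = σ * f / Real.sqrt (q * p * n))
    (hα₀ : α₀ = p * (1 - q * ρ / f))
    (τ g : ℝ → ℝ)
    (hτ : ∀ α, τ α = (p - α) * Real.sqrt (n / (q * p)))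
    (hg : ∀ α, g α = μ * stdNormalCDF (τ α) + ν * stdNormalPDF (τ α)) :
    ∀ α : ℝ, α ≠ α₀ → g α < g α₀ := by
  intro α hα
  have hn₀ : (0 : ℝ) < n := by exact_mod_cast hn
  have hqp : 0 < q * p := hq ▸ hp ▸ mul_pos (stdNormalCDF_pos _) (stdNormalCDF_pos _)
  have hf₀ : 0 < f := hf ▸ stdNormalPDF_pos ρ
  have hc : 0 < Real.sqrt (n / (q * p)) := Real.sqrt_pos.2 (div_pos hn₀ hqp)
  have hν₀ : 0 < ν := hν ▸ div_pos (mul_pos hσ hf₀) (Real.sqrt_pos.2 (mul_pos hqp hn₀))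
  have hτα₀ : τ α₀ = μ / ν := by
    rw [hτ, hα₀, hν, hρ, ← mul_sqrt_div_self hqp n]
    field_simp
    ring
  have hτα : τ α ≠ μ / ν := by
    rw [← hτα₀, hτ, hτ]
    exact fun h => hα (by linarith [mul_right_cancel₀ hc.ne' h])
  rw [hg, hg, hτα₀]
  exact mul_stdNormalCDF_add_mul_stdNormalPDF_lt hν₀ hτα
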